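/- For k ≥ 2, the complement graph of Δ^L_{k,1} contains no cycle of odd length; equivalently, the complement of Δ^L_{k,1} is bipartite. -/

import Mathlib

inductive V (k n : ℕ) where
  | c : V k n
  | a : Fin k → V k n
  | b : Fin (k + n) → V k n
deriving DecidableEq, Fintype

def adj (k n : ℕ) : V k n → V k n → Prop
  | .a i, .a j => i ≠ j
  | .b i, .b j => i ≠ j
  | .a i, .b j => (j : ℕ) = (i : ℕ) ∨ (j : ℕ) = k + i
  | .b j, .a i => (j : ℕ) = (i : ℕ) ∨ (j : ℕ) = k + i
  | .c, .a _ => True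
  | .a _, .c => True
  | _, _ => False

instance (k n : ℕ) : DecidableRel (adj k n) := fun x y => by
  cases x <;> cases y <;> simp only [adj] <;> infer_instance

def DeltaL (k n : ℕ) : SimpleGraph (V k n) where
  Adj := adj k n
  symm := by
    constructor
    intro x y h
    cases x <;> cases y <;> simp_all [adj] <;> tauto
  loopless := by
    constructor
    intro x h
    cases x <;> simp_all [adj]

namespace DeltaL

/-- Both `{c, a₁, …, aₖ}` and `{b₁, …, b_{k+n}}` are cliques of `DeltaL k n`, so colouring by
membership in the `b`-part is proper for the complement. -/
def complColoring (k n : ℕ) : (DeltaL k n)ᶜ.Coloring Bool :=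
  SimpleGraph.Coloring.mk (fun | .b _ => true | _ => false) <| by
    rintro u v ⟨hne, hnadj⟩
    cases u <;> cases v <;> simp_all [DeltaL, adj]

theorem compl_colorable_two (k n : ℕ) : (DeltaL k n)ᶜ.Colorable 2 := by
  simpa using (complColoring k n).colorable

theorem even_length_compl_walk_self {k n : ℕ} {v : V k n} (p : (DeltaL k n)ᶜ.Walk v v) :
    Even p.length :=
  (complColoring k n).even_length_iff_congr p |>.mpr (by rfl)

end DeltaL

theorem stmt11_general (k : ℕ) :
    (DeltaL k 1)ᶜ.Colorable 2 ∧
    (∀ (v : V k 1) (p : (DeltaL k 1)ᶜ.Walk v v), p.IsCycle → Even p.length) :=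
  ⟨DeltaL.compl_colorable_two k 1, fun _ p _ => DeltaL.even_length_compl_walk_self p⟩

theorem stmt11 (k : ℕ) (hk : 2 ≤ k) :
    (DeltaL k 1)ᶜ.Colorable 2 ∧
    (∀ (v : V k 1) (p : (DeltaL k 1)ᶜ.Walk v v), p.IsCycle → Even p.length) :=
  stmt11_general k
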